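/- (Good Situation 3) In the Online Bin Stretching game Game(m,t,g) with α := (t−1) − g ≥ 0 and m ≥ 3, let (L, I) be a bin configuration with loads sorted in descending order L_1 ≥ L_2 ≥ … ≥ L_m. Let s := L_1 + … + L_{m−2} be the sum of the loads of all bins except the last two; let r (the last bin load requirement) be the smallest load such that if the last bin had load at least r then, after reordering the bins by load, the hypothesis of Good Situation 1 would hold (i.e., the sum of the loads of all bins except the then-least-loaded bin would be at least (m−1)·g − α); and let o := t − r (the overflow). If r ≤ t − 1 and there is a bin A among the last two bins (A = B_{m−1} or A = B_m) whose load satisfies (m−1)·g − α − o − s < load(A) ≤ α, then the Algorithm has a winning strategy from (L, I): there is a strategy for the Algorithm that, against every continuation of items for which the full multiset of items remains packable into m bins of capacity g, keeps every bin load at most t − 1. -/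

import Mathlib

/-- `AddToBin St e b` increases the load of the `b`-th bin of `St` by `e`
(appending a new bin of load `e` if `b` is beyond the length of `St`). -/
def AddToBin : List ℕ → ℕ → ℕ → List ℕ
  | [], e, _ => [e]
  | x :: s, e, 0 => (x + e) :: s
  | x :: s, e, k + 1 => x :: AddToBin s e k

/-- The load of the most loaded bin. -/
def MaxBinValue (St : List ℕ) : ℕ := St.foldr max 0

/-- `Packable m g ℓ` : the items of `ℓ` can be packed into `m` bins,
each of total size at most `g`. -/
def Packable (m g : ℕ) (ℓ : List ℕ) : Prop :=
  ∃ P : List (List ℕ), P.length = m ∧ (∀ B ∈ P, B.sum ≤ g) ∧ P.flatten.Perm ℓ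

/-- `BinConfig m L I` : `(L, I)` is a bin configuration on `m` bins: `L` is the
`m`-tuple of bin loads and the multiset of items `I` can be packed into the `m`
bins producing exactly the loads `L`. -/
def BinConfig (m : ℕ) (L I : List ℕ) : Prop :=
  L.length = m ∧ ∃ P : List (List ℕ), P.map List.sum = L ∧ P.flatten.Perm I

/-- `RunAlg σ hist St es` : the bin loads obtained from the loads `St` after the
sequence of items `es` has arrived (one at a time) and each item has been packed by
the online strategy `σ`, which chooses a bin given the items sent so far, the
current loads and the incoming item; `hist` is the list of previously sent items. -/
def RunAlg (σ : List ℕ → List ℕ → ℕ → ℕ) : List ℕ → List ℕ → List ℕ → List ℕ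
  | _, St, [] => St
  | hist, St, e :: es => RunAlg σ (e :: hist) (AddToBin St e (σ hist St e)) es

/-- `AlgWins m t g ℓ St` : the Algorithm has a winning strategy in the Online Bin
Stretching game `Game(m,t,g)` from the state with already-sent items `ℓ` and bin
loads `St`: there is an online strategy (always choosing a bin index `< m`) such
that, against every continuation `es` of positive items for which the full multiset
of items remains packable into `m` bins of capacity `g`, every bin load stays at
most `t - 1` (loads only grow, so it suffices that the final loads are at most
`t - 1` for every admissible continuation, each prefix of an admissible continuation
being itself admissible). -/
def AlgWins (m t g : ℕ) (ℓ St : List ℕ) : Prop :=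
  ∃ σ : List ℕ → List ℕ → ℕ → ℕ,
    (∀ hist L e, σ hist L e < m) ∧
    ∀ es : List ℕ, (∀ e ∈ es, 0 < e) → Packable m g (es ++ ℓ) →
      MaxBinValue (RunAlg σ ℓ St es) ≤ t - 1

/-!
The Algorithm keeps bin `A` in reserve: an item goes into the first bin other than `A` where it
fits, and into `A` only when it fits nowhere else. With `T = t - 1`, `B` the other of the last two
bins and `F = m g - (total load)` the volume still to come, the invariant is that
`F ≤ T - load B`, or `F ≤ T - load A`, or `load A ≤ α` and `2 F ≤ 2 (T - load B) + (T - load A)`.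
Initially the first two alternatives are Good Situation 1, and otherwise the last bin load
requirement is `r = (m - 1) g - α - s`, so the hypothesis on `A` is the third alternative.
An item that fits nowhere but `A` exceeds `T - load B`, so the first alternative was false; it
fits in `A` because `load A ≤ α = T - g`, and the third inequality then turns into the first or
second alternative.
-/

theorem addToBin_sum : ∀ (St : List ℕ) (e b : ℕ), (AddToBin St e b).sum = St.sum + e
  | [], _, _ => by simp [AddToBin]
  | x :: s, e, 0 => by simp only [AddToBin, List.sum_cons]; omega
  | x :: s, e, b + 1 => by simp only [AddToBin, List.sum_cons, addToBin_sum s e b]; omega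

theorem addToBin_length : ∀ {St : List ℕ} {b : ℕ} (e : ℕ), b < St.length →
    (AddToBin St e b).length = St.length
  | x :: s, 0, _, _ => rfl
  | x :: s, b + 1, e, h => by
    simp [AddToBin, addToBin_length e (Nat.lt_of_succ_lt_succ h)]

theorem addToBin_getD : ∀ {St : List ℕ} {b : ℕ} (e i : ℕ), b < St.length →
    (AddToBin St e b).getD i 0 = St.getD i 0 + if i = b then e else 0
  | x :: s, 0, e, 0, _ => by simp [AddToBin]
  | x :: s, 0, e, i + 1, _ => by simp [AddToBin]
  | x :: s, b + 1, e, 0, _ => by simp [AddToBin]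
  | x :: s, b + 1, e, i + 1, h => by
    simp only [AddToBin, List.getD_cons_succ, addToBin_getD e i (Nat.lt_of_succ_lt_succ h),
      Nat.add_right_cancel_iff]

theorem maxBinValue_addToBin_le : ∀ {St : List ℕ} {c : ℕ} (e b : ℕ), MaxBinValue St ≤ c →
    St.getD b 0 + e ≤ c → MaxBinValue (AddToBin St e b) ≤ c
  | [], _, _, _, _, h => by simpa [AddToBin, MaxBinValue] using h
  | x :: s, _, _, 0, hSt, h => by simp_all [AddToBin, MaxBinValue]
  | x :: s, _, e, b + 1, hSt, h => by
    simp only [MaxBinValue, AddToBin, List.foldr_cons, max_le_iff] at hSt ⊢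
    exact ⟨hSt.1, maxBinValue_addToBin_le e b hSt.2 (by simpa using h)⟩

theorem Packable.sum_le {m g : ℕ} {ℓ : List ℕ} (h : Packable m g ℓ) : ℓ.sum ≤ m * g := by
  obtain ⟨P, hlen, hbins, hperm⟩ := h
  calc ℓ.sum = (P.map List.sum).sum := by rw [← hperm.sum_eq, List.sum_flatten]
    _ ≤ (P.map List.sum).length • g :=
      List.sum_le_card_nsmul _ _ (by simpa using hbins)
    _ = m * g := by simp [hlen]

theorem Packable.le_of_mem {m g x : ℕ} {ℓ : List ℕ} (h : Packable m g ℓ) (hx : x ∈ ℓ) :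
    x ≤ g := by
  obtain ⟨P, -, hbins, hperm⟩ := h
  obtain ⟨B, hB, hxB⟩ := List.mem_flatten.mp (hperm.mem_iff.mpr hx)
  exact (List.le_sum_of_mem hxB).trans (hbins B hB)

theorem BinConfig.sum_eq {m : ℕ} {L I : List ℕ} (h : BinConfig m L I) : I.sum = L.sum := by
  obtain ⟨-, P, rfl, hperm⟩ := h
  rw [← hperm.sum_eq, List.sum_flatten]

section Invariant

variable {m g c : ℕ} {σ : List ℕ → List ℕ → ℕ → ℕ} {P : List ℕ → Prop}

theorem maxBinValue_runAlg_le (hσ : ∀ hist St e, σ hist St e < m)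
    (hstep : ∀ hist St e, St.length = m → P St → e ≤ g → St.sum + e ≤ m * g →
      St.getD (σ hist St e) 0 + e ≤ c ∧ P (AddToBin St e (σ hist St e))) :
    ∀ (es hist St : List ℕ), St.length = m → MaxBinValue St ≤ c → P St →
      (∀ e ∈ es, e ≤ g) → St.sum + es.sum ≤ m * g → MaxBinValue (RunAlg σ hist St es) ≤ c
  | [], _, _, _, hmax, _, _, _ => hmax
  | e :: es, hist, St, hlen, hmax, hP, hes, hsum => by
    have hlt : σ hist St e < St.length := hlen ▸ hσ hist St e
    obtain ⟨hfit, hP'⟩ := hstep hist St e hlen hP (hes e List.mem_cons_self)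
      (by simp only [List.sum_cons] at hsum; omega)
    refine maxBinValue_runAlg_le hσ hstep es _ _ ((addToBin_length e hlt).trans hlen)
      (maxBinValue_addToBin_le e _ hmax hfit) hP' (fun x hx => hes x (List.mem_cons_of_mem e hx)) ?_
    simp only [List.sum_cons, addToBin_sum] at hsum ⊢
    omega

theorem algWins_of_invariant {t : ℕ} {L I : List ℕ} (hσ : ∀ hist St e, σ hist St e < m)
    (hstep : ∀ hist St e, St.length = m → P St → e ≤ g → St.sum + e ≤ m * g →
      St.getD (σ hist St e) 0 + e ≤ t - 1 ∧ P (AddToBin St e (σ hist St e)))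
    (hconf : BinConfig m L I) (hmax : MaxBinValue L ≤ t - 1) (hP : P L) :
    AlgWins m t g I L := by
  refine ⟨σ, hσ, fun es _ hpack => ?_⟩
  have hsum := hpack.sum_le
  rw [List.sum_append, hconf.sum_eq] at hsum
  exact maxBinValue_runAlg_le hσ hstep es I L hconf.1 hmax hP
    (fun e he => hpack.le_of_mem (List.mem_append_left I he)) (by omega)

end Invariant

namespace GoodSituationThree

/-- `M = m g` is the total capacity, `T = t - 1` the load cap, `S` the total load and `a`, `b`
the loads of the bins `A` and `B`; the alternatives are written without subtraction. -/
def Reserve (M T g S a b : ℕ) : Prop :=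
  M + b ≤ S + T ∨ M + a ≤ S + T ∨ (a + g ≤ T ∧ 2 * M + 2 * b + a ≤ 2 * S + 3 * T)

variable {M T g S a b e : ℕ}

theorem Reserve.add_other (h : Reserve M T g S a b) {b' : ℕ} (hb : b' ≤ b + e) :
    Reserve M T g (S + e) a b' := by
  unfold Reserve at *; omega

theorem Reserve.add_reserve (h : Reserve M T g S a b) (he : e ≤ g) (hS : S + e ≤ M)
    (hb : T < b + e) : a + e ≤ T ∧ Reserve M T g (S + e) (a + e) b := by
  unfold Reserve at *; omega

theorem sInf_le_add_sub_min {s a c : ℕ} (h : s + a < c) :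
    sInf {x : ℕ | c ≤ s + a + x - min a x} = c - s := by
  have hmem : c - s ∈ {x : ℕ | c ≤ s + a + x - min a x} := by
    simp only [Set.mem_ofPred_eq]; omega
  refine le_antisymm (Nat.sInf_le hmem) (le_csInf ⟨_, hmem⟩ fun x hx => ?_)
  simp only [Set.mem_ofPred_eq] at hx
  omega

def strategy (m t A : ℕ) (St : List ℕ) (e : ℕ) : ℕ :=
  ((List.range m).find? fun i => i ≠ A ∧ St.getD i 0 + e ≤ t - 1).getD A

theorem strategy_lt {m t A : ℕ} (hA : A < m) (St : List ℕ) (e : ℕ) :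
    strategy m t A St e < m := by
  unfold strategy
  cases hfind : (List.range m).find? fun i => i ≠ A ∧ St.getD i 0 + e ≤ t - 1 with
  | some b => exact List.mem_range.mp (List.mem_of_find?_eq_some hfind)
  | none => exact hA

theorem strategy_cases (m t A : ℕ) (St : List ℕ) (e : ℕ) :
    (strategy m t A St e ≠ A ∧ St.getD (strategy m t A St e) 0 + e ≤ t - 1) ∨
    (strategy m t A St e = A ∧ ∀ i < m, i ≠ A → t - 1 < St.getD i 0 + e) := by
  unfold strategy
  cases hfind : (List.range m).find? fun i => i ≠ A ∧ St.getD i 0 + e ≤ t - 1 with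
  | some b => exact .inl (by simpa using List.find?_some hfind)
  | none =>
    refine .inr ⟨rfl, fun i hi hiA => ?_⟩
    have := List.find?_eq_none.mp hfind i (List.mem_range.mpr hi)
    simp only [decide_eq_true_eq, not_and, not_le] at this
    exact this hiA

theorem strategy_step {m t g A B : ℕ} (hA : A < m) (hB : B < m) (hAB : A ≠ B)
    {St : List ℕ} (hlen : St.length = m) {e : ℕ}
    (hres : Reserve (m * g) (t - 1) g St.sum (St.getD A 0) (St.getD B 0))
    (he : e ≤ g) (hsum : St.sum + e ≤ m * g) :
    St.getD (strategy m t A St e) 0 + e ≤ t - 1 ∧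
      Reserve (m * g) (t - 1) g (AddToBin St e (strategy m t A St e)).sum
        ((AddToBin St e (strategy m t A St e)).getD A 0)
        ((AddToBin St e (strategy m t A St e)).getD B 0) := by
  rcases strategy_cases m t A St e with ⟨hne, hfit⟩ | ⟨heq, hnofit⟩
  · have hlt : strategy m t A St e < St.length := hlen ▸ strategy_lt hA St e
    refine ⟨hfit, ?_⟩
    rw [addToBin_sum, addToBin_getD e A hlt, addToBin_getD e B hlt,
      if_neg hne.symm, add_zero]
    exact hres.add_other (by split_ifs <;> omega)
  · rw [heq]
    have hBA : B ≠ A := hAB.symm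
    rw [addToBin_sum, addToBin_getD e A (hlen ▸ hA), addToBin_getD e B (hlen ▸ hA),
      if_pos rfl, if_neg hBA, add_zero]
    exact hres.add_reserve he hsum (hnofit B hB hBA)

theorem reserve_initial {m t g r A B : ℕ} {L : List ℕ} (hm : 2 ≤ m) (hlen : L.length = m)
    (ht : g + 1 ≤ t)
    (hr : r = sInf {x : ℕ |
      (m - 1) * g - ((t - 1) - g) ≤ L.dropLast.sum + x - min (L.getD (m - 2) 0) x})
    (hAB : A = m - 2 ∧ B = m - 1 ∨ A = m - 1 ∧ B = m - 2)
    (hAlo : (m - 1) * g - ((t - 1) - g) - (t - r) - (L.take (m - 2)).sum < L.getD A 0)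
    (hAhi : L.getD A 0 ≤ (t - 1) - g) :
    Reserve (m * g) (t - 1) g L.sum (L.getD A 0) (L.getD B 0) := by
  have hmg : m * g = (m - 1) * g + g := by
    rw [← Nat.succ_mul, Nat.succ_eq_add_one, Nat.sub_add_cancel (by omega)]
  have hdrop : L.dropLast.sum = (L.take (m - 2)).sum + L.getD (m - 2) 0 := by
    rw [List.dropLast_eq_take, hlen, show m - 1 = m - 2 + 1 by omega,
      List.sum_take_succ _ _ (by omega), List.getD_eq_getElem _ _ (by omega)]
  have htotal : L.sum = L.dropLast.sum + L.getD (m - 1) 0 := by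
    rw [List.dropLast_eq_take, hlen, List.getD_eq_getElem _ _ (by omega),
      ← List.sum_take_succ _ _ (by omega), Nat.sub_add_cancel (by omega),
      List.take_of_length_le hlen.le]
  rw [hdrop] at hr htotal
  unfold Reserve
  by_cases hlarge : (m - 1) * g - ((t - 1) - g) ≤ (L.take (m - 2)).sum + L.getD (m - 2) 0
  · rcases hAB with ⟨rfl, rfl⟩ | ⟨rfl, rfl⟩ <;> omega
  · rw [sInf_le_add_sub_min (by omega)] at hr
    rcases hAB with ⟨rfl, rfl⟩ | ⟨rfl, rfl⟩ <;> omega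

end GoodSituationThree

theorem good_situation_three_general (m t g : ℕ) (hm : 3 ≤ m) (ht : g + 1 ≤ t)
    (L I : List ℕ) (hconf : BinConfig m L I)
    (hsafe : MaxBinValue L ≤ t - 1)
    (α s r o : ℕ)
    (hα : α = (t - 1) - g)
    (hs : s = (L.take (m - 2)).sum)
    (hr : r = sInf {x : ℕ |
      (m - 1) * g - α ≤ L.dropLast.sum + x - min (L.getD (m - 2) 0) x})
    (ho : o = t - r)
    (A : ℕ) (hA : A = m - 2 ∨ A = m - 1)
    (hAlo : (m - 1) * g - α - o - s < L.getD A 0)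
    (hAhi : L.getD A 0 ≤ α) :
    AlgWins m t g I L := by
  open GoodSituationThree in
  subst hα hs ho
  obtain ⟨B, hAB⟩ : ∃ B, A = m - 2 ∧ B = m - 1 ∨ A = m - 1 ∧ B = m - 2 := by
    rcases hA with hA | hA
    exacts [⟨_, .inl ⟨hA, rfl⟩⟩, ⟨_, .inr ⟨hA, rfl⟩⟩]
  have hAm : A < m := by omega
  refine algWins_of_invariant (σ := fun _ => strategy m t A) (fun _ => strategy_lt hAm)
    (fun _ St e hlen hres he hsum => strategy_step hAm (by omega) (by omega) hlen hres he hsum)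
    hconf hsafe (reserve_initial (by omega) hconf.1 ht hr hAB hAlo hAhi)

/-- Good Situation 3: in `Game(m,t,g)` with `m ≥ 3` and `α = (t-1) - g ≥ 0`, let
`(L, I)` be a bin configuration (with all loads at most `t-1`, as for every state
reached in the game) whose loads are sorted in descending order.  Let
`s = L₁ + … + L_{m-2}` be the sum of the loads of all bins except the last two;
let `r` (the last bin load requirement) be the smallest load `x` such that, if the
currently last bin had load `x`, the hypothesis of Good Situation 1 would hold after
reordering the bins by load, i.e. the sum of all loads except a least-loaded bin
(whose load is `min L_{m-1} x`, by sortedness) would be at least `(m-1)·g - α`;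
and let `o = t - r` be the overflow.  If `r ≤ t - 1` and one of the last two bins
(index `A ∈ {m-2, m-1}`, 0-based) has load strictly greater than
`(m-1)·g - α - o - s` and at most `α`, then the Algorithm has a winning strategy
from `(L, I)`: there is a strategy keeping every bin load at most `t - 1` against
every continuation that stays packable into `m` bins of capacity `g`. -/
theorem good_situation_three (m t g : ℕ) (hm : 3 ≤ m) (ht : g + 1 ≤ t)
    (L I : List ℕ) (hconf : BinConfig m L I) (hsorted : L.Pairwise (· ≥ ·))
    (hsafe : MaxBinValue L ≤ t - 1)
    (α s r o : ℕ)
    (hα : α = (t - 1) - g)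
    (hs : s = (L.take (m - 2)).sum)
    (hr : r = sInf {x : ℕ |
      (m - 1) * g - α ≤ L.dropLast.sum + x - min (L.getD (m - 2) 0) x})
    (ho : o = t - r)
    (hrt : r ≤ t - 1)
    (A : ℕ) (hA : A = m - 2 ∨ A = m - 1)
    (hAlo : (m - 1) * g - α - o - s < L.getD A 0)
    (hAhi : L.getD A 0 ≤ α) :
    AlgWins m t g I L :=
  good_situation_three_general m t g hm ht L I hconf hsafe α s r o hα hs hr ho A hA hAlo hAhi
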